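/- arXiv:2604.14486 — 3 statements merged into one kernel-verified Lean document; each statement's English description precedes it below -/
import Mathlib

section
/- Fix y ∈ ℝ^d and a measurable g : ℝ^d → ℝ. Let f_V be a probability density on ℝ^d with characteristic function φ_V nonzero Lebesgue-almost everywhere, and suppose the function λ(x) = g(x) f_V(y − x) is continuous and vanishes at infinity. Then there exists a unique bounded linear functional T on A_V(ℝ^d) such that T[K_V[μ]] = ∫ λ dμ for every μ ∈ M(ℝ^d), and for every probability measure P_X on ℝ^d, writing f_Y = K_V[P_X], one has: T[f_Y] = ∫ g(x) f_V(y − x) dP_X(x), so that whenever f_Y(y) > 0 this integral is finite and T[f_Y]/f_Y(y) equals the posterior expectation ∫ g(x) f_V(y − x) dP_X(x) / f_Y(y) of g(X) given Y = y in the additive-noise model Y = X + V with X independent of V. -/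
open MeasureTheory Filter Topology

noncomputable section

abbrev Ed (d : ℕ) := EuclideanSpace ℝ (Fin d)

/-- Integral of a complex-valued function against a finite signed measure,
via the Jordan decomposition. -/
def sInt {d : ℕ} (μ : SignedMeasure (Ed d)) (f : Ed d → ℂ) : ℂ :=
  (∫ x, f x ∂μ.toJordanDecomposition.posPart) -
    ∫ x, f x ∂μ.toJordanDecomposition.negPart

/-- Total variation norm of a finite signed measure. -/
def tvNorm {d : ℕ} (μ : SignedMeasure (Ed d)) : ℝ :=
  (μ.totalVariation Set.univ).toReal

/-- Convolution operator `K_V[μ](y) = ∫ f_V (y - x) dμ(x)`. -/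
def KV {d : ℕ} (fV : Ed d → ℝ) (μ : SignedMeasure (Ed d)) : Ed d → ℂ :=
  fun y => sInt μ fun x => (fV (y - x) : ℂ)

/-- The class of `V`-admissible mixtures `A_V = {f_V * μ : μ ∈ M(ℝ^d)}`. -/
def AV {d : ℕ} (fV : Ed d → ℝ) : Set (Ed d → ℂ) :=
  {f | ∃ μ : SignedMeasure (Ed d), f = KV fV μ}

/-- Characteristic function `φ_V(ω) = ∫ e^{i⟨ω,v⟩} f_V(v) dv` of a density. -/
def charFn {d : ℕ} (fV : Ed d → ℝ) (ω : Ed d) : ℂ :=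
  ∫ v, Complex.exp (Complex.I * ((inner ℝ ω v : ℝ) : ℂ)) * (fV v : ℂ)

/-- `f_V` is a probability density on `ℝ^d`. -/
def IsDensity {d : ℕ} (fV : Ed d → ℝ) : Prop :=
  Measurable fV ∧ (∀ v, 0 ≤ fV v) ∧ Integrable fV ∧ ∫ v, fV v = 1

/-! Convolution with `f_V` multiplies characteristic functions by `φ_V`. As `φ_V` is nonzero
almost everywhere and characteristic functions of finite measures are continuous and determine the
measure, `μ ↦ f_V * μ` is injective on finite signed measures (apply this to the two Jordan parts).
So `T[f_V * μ] := ∫ λ dμ` is well defined, and linearity and the norm bound come from integration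
against signed measures. Since `f_V * μ` is real-valued, a relation
`f_V * ν = a (f_V * μ₁) + b (f_V * μ₂)` with complex `a, b` splits into its real and imaginary
parts, each a relation between signed measures. -/

open MeasureTheory Complex
open scoped RealInnerProductSpace BoundedContinuousFunction

section Group

variable {G F : Type*} [MeasurableSpace G] [AddGroup G] [MeasurableAdd₂ G] [MeasurableNeg G]
  [NormedAddCommGroup F] {ν : Measure G} [SFinite ν] [ν.IsAddRightInvariant] {f : G → F}

theorem MeasureTheory.Integrable.comp_sub_prod (hf : Integrable f ν) (M : Measure G)
    [IsFiniteMeasure M] : Integrable (fun p : G × G => f (p.1 - p.2)) (ν.prod M) := by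
  have hmeas : AEStronglyMeasurable (fun p : G × G => f (p.1 - p.2)) (ν.prod M) :=
    hf.aestronglyMeasurable.comp_quasiMeasurePreserving
      (quasiMeasurePreserving_sub_of_right_invariant ν M)
  refine (integrable_prod_iff' hmeas).2 ⟨.of_forall fun x => hf.comp_sub_right x, ?_⟩
  simp_rw [integral_sub_right_eq_self fun z => ‖f z‖]
  exact integrable_const _

theorem MeasureTheory.Integrable.ae_integrable_comp_sub (hf : Integrable f ν) (M : Measure G)
    [IsFiniteMeasure M] : ∀ᵐ z ∂ν, Integrable (fun x => f (z - x)) M :=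
  (hf.comp_sub_prod M).prod_right_ae

end Group

section InnerProductSpace

variable {E : Type*} [NormedAddCommGroup E] [InnerProductSpace ℝ E] [MeasurableSpace E]
  [BorelSpace E] {ν : Measure E} [ν.IsAddRightInvariant] {f : E → ℝ}

theorem integral_exp_inner_mul_comp_sub (t x : E) :
    ∫ z, cexp (⟪z, t⟫ * I) * f (z - x) ∂ν
      = cexp (⟪x, t⟫ * I) * ∫ v, cexp (⟪v, t⟫ * I) * f v ∂ν := by
  rw [← integral_add_right_eq_self _ x, ← integral_const_mul]
  congr 1 with v
  rw [add_sub_cancel_right, inner_add_left, ofReal_add, add_mul, Complex.exp_add]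
  ring

variable [SecondCountableTopology E] [SFinite ν]

theorem integral_exp_inner_mul_integral_comp_sub (hf : Integrable f ν) (M : Measure E)
    [IsFiniteMeasure M] (t : E) :
    ∫ z, cexp (⟪z, t⟫ * I) * ((∫ x, f (z - x) ∂M : ℝ) : ℂ) ∂ν
      = (∫ v, cexp (⟪v, t⟫ * I) * f v ∂ν) * charFun M t := by
  have hint : Integrable (fun p : E × E => cexp (⟪p.1, t⟫ * I) * f (p.1 - p.2)) (ν.prod M) :=
    (hf.comp_sub_prod M).ofReal.bdd_mul (c := 1) (by fun_prop)
      (.of_forall fun p => (norm_exp_ofReal_mul_I _).le)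
  calc ∫ z, cexp (⟪z, t⟫ * I) * ((∫ x, f (z - x) ∂M : ℝ) : ℂ) ∂ν
      = ∫ z, ∫ x, cexp (⟪z, t⟫ * I) * f (z - x) ∂M ∂ν := by
        congr 1 with z
        rw [integral_const_mul, integral_complex_ofReal]
    _ = ∫ x, ∫ z, cexp (⟪z, t⟫ * I) * f (z - x) ∂ν ∂M := integral_integral_swap hint
    _ = (∫ v, cexp (⟪v, t⟫ * I) * f v ∂ν) * charFun M t := by
        simp_rw [integral_exp_inner_mul_comp_sub, integral_mul_const, charFun_apply, mul_comm]

theorem MeasureTheory.Measure.ext_of_integral_comp_sub_ae_eq [CompleteSpace E]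
    [ν.IsOpenPosMeasure] (hf : Integrable f ν)
    (hφ : ∀ᵐ t ∂ν, ∫ v, cexp (⟪v, t⟫ * I) * f v ∂ν ≠ 0)
    {A B : Measure E} [IsFiniteMeasure A] [IsFiniteMeasure B]
    (hAB : (fun z => ∫ x, f (z - x) ∂A) =ᵐ[ν] fun z => ∫ x, f (z - x) ∂B) : A = B := by
  have hprod : ∀ t, (∫ v, cexp (⟪v, t⟫ * I) * f v ∂ν) * charFun A t
      = (∫ v, cexp (⟪v, t⟫ * I) * f v ∂ν) * charFun B t := fun t => by
    rw [← integral_exp_inner_mul_integral_comp_sub hf,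
      ← integral_exp_inner_mul_integral_comp_sub hf]
    exact integral_congr_ae (hAB.mono fun z hz => by simp only [hz])
  have hae : charFun A =ᵐ[ν] charFun B := hφ.mono fun t ht => mul_left_cancel₀ ht (hprod t)
  exact Measure.ext_of_charFun ((continuous_charFun.ae_eq_iff_eq ν continuous_charFun).1 hae)

end InnerProductSpace

section SignedMeasure

variable {d : ℕ}

theorem sInt_eq_integral {μ : SignedMeasure (Ed d)} {f : Ed d → ℂ}
    (hf : Integrable f μ.totalVariation) : sInt μ f = ∫ᵛ x, f x ∂<•μ := by
  have hP : Integrable f μ.toJordanDecomposition.posPart.toSignedMeasure.variation := by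
    simpa using hf.mono_measure (Measure.le_add_right le_rfl)
  have hN : Integrable f μ.toJordanDecomposition.negPart.toSignedMeasure.variation := by
    simpa using hf.mono_measure (Measure.le_add_left le_rfl)
  conv_rhs => rw [← μ.toSignedMeasure_toJordanDecomposition]
  rw [JordanDecomposition.toSignedMeasure, VectorMeasure.integral_sub_vectorMeasure hP hN,
    VectorMeasure.integral_toSignedMeasure, VectorMeasure.integral_toSignedMeasure, sInt]

theorem sInt_toSignedMeasure {M : Measure (Ed d)} [IsFiniteMeasure M] {f : Ed d → ℂ}
    (hf : Integrable f M) : sInt M.toSignedMeasure f = ∫ x, f x ∂M := by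
  rw [sInt_eq_integral (by rwa [SignedMeasure.totalVariation_eq_variation,
    Measure.variation_toSignedMeasure]), VectorMeasure.integral_toSignedMeasure]

theorem sInt_zero (f : Ed d → ℂ) : sInt 0 f = 0 := by
  simp [sInt, SignedMeasure.toJordanDecomposition_zero]

theorem sInt_smul_add_smul {f : Ed d → ℂ} {μ₁ μ₂ : SignedMeasure (Ed d)}
    (h₁ : Integrable f μ₁.totalVariation) (h₂ : Integrable f μ₂.totalVariation) (c₁ c₂ : ℝ) :
    sInt (c₁ • μ₁ + c₂ • μ₂) f = c₁ * sInt μ₁ f + c₂ * sInt μ₂ f := by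
  rw [SignedMeasure.totalVariation_eq_variation] at h₁ h₂
  have h₁' : (c₁ • μ₁).Integrable f := VectorMeasure.Integrable.smul_vectorMeasure h₁ c₁
  have h₂' : (c₂ • μ₂).Integrable f := VectorMeasure.Integrable.smul_vectorMeasure h₂ c₂
  rw [sInt_eq_integral, sInt_eq_integral, sInt_eq_integral,
    VectorMeasure.integral_add_vectorMeasure h₁' h₂', VectorMeasure.integral_smul_vectorMeasure,
    VectorMeasure.integral_smul_vectorMeasure, real_smul, real_smul]
  all_goals rw [SignedMeasure.totalVariation_eq_variation]
  exacts [h₂, h₁, VectorMeasure.Integrable.add_vectorMeasure h₁' h₂']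

theorem norm_sInt_le {f : Ed d → ℂ} {C : ℝ} (hf : ∀ x, ‖f x‖ ≤ C) (μ : SignedMeasure (Ed d)) :
    ‖sInt μ f‖ ≤ C * tvNorm μ := by
  have htv : tvNorm μ = μ.toJordanDecomposition.posPart.real Set.univ
      + μ.toJordanDecomposition.negPart.real Set.univ := by
    rw [tvNorm, SignedMeasure.totalVariation, ← measureReal_def, measureReal_add_apply]
  calc ‖sInt μ f‖ ≤ ‖∫ x, f x ∂μ.toJordanDecomposition.posPart‖
        + ‖∫ x, f x ∂μ.toJordanDecomposition.negPart‖ := norm_sub_le _ _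
    _ ≤ C * μ.toJordanDecomposition.posPart.real Set.univ
        + C * μ.toJordanDecomposition.negPart.real Set.univ :=
      add_le_add (norm_integral_le_of_norm_le_const (.of_forall hf))
        (norm_integral_le_of_norm_le_const (.of_forall hf))
    _ = C * tvNorm μ := by rw [htv, mul_add]

end SignedMeasure

section KV

variable {d : ℕ} {fV : Ed d → ℝ}

theorem KV_apply (fV : Ed d → ℝ) (μ : SignedMeasure (Ed d)) (z : Ed d) :
    KV fV μ z = ((∫ x, fV (z - x) ∂μ.toJordanDecomposition.posPart)
      - ∫ x, fV (z - x) ∂μ.toJordanDecomposition.negPart : ℝ) := by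
  rw [KV, sInt, integral_complex_ofReal, integral_complex_ofReal, ofReal_sub]

theorem ae_KV_smul_add_smul (hfV : Integrable fV) (c₁ c₂ : ℝ) (μ₁ μ₂ : SignedMeasure (Ed d)) :
    ∀ᵐ z, KV fV (c₁ • μ₁ + c₂ • μ₂) z = c₁ * KV fV μ₁ z + c₂ * KV fV μ₂ z := by
  filter_upwards [hfV.ae_integrable_comp_sub μ₁.totalVariation,
    hfV.ae_integrable_comp_sub μ₂.totalVariation] with z h₁ h₂
  exact sInt_smul_add_smul h₁.ofReal h₂.ofReal c₁ c₂

theorem charFn_eq_integral (fV : Ed d → ℝ) (t : Ed d) :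
    charFn fV t = ∫ v, cexp (⟪v, t⟫ * I) * fV v := by
  simp only [charFn, real_inner_comm, mul_comm I]

theorem eq_zero_of_KV_ae_eq_zero (hfV : Integrable fV) (hφ : ∀ᵐ t, charFn fV t ≠ 0)
    {μ : SignedMeasure (Ed d)} (h : KV fV μ =ᵐ[volume] 0) : μ = 0 := by
  have hparts : μ.toJordanDecomposition.posPart = μ.toJordanDecomposition.negPart := by
    refine Measure.ext_of_integral_comp_sub_ae_eq hfV
      (by simpa only [charFn_eq_integral] using hφ) ?_
    filter_upwards [h] with z hz
    rwa [Pi.zero_apply, KV_apply, ofReal_eq_zero, sub_eq_zero] at hz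
  rw [← μ.toSignedMeasure_toJordanDecomposition, JordanDecomposition.toSignedMeasure]
  simp only [hparts, sub_self]

theorem eq_of_KV_ae_eq (hfV : Integrable fV) (hφ : ∀ᵐ t, charFn fV t ≠ 0)
    {μ μ' : SignedMeasure (Ed d)} (h : KV fV μ =ᵐ[volume] KV fV μ') : μ = μ' := by
  refine sub_eq_zero.1 (eq_zero_of_KV_ae_eq_zero hfV hφ ?_)
  have hsub : (1 : ℝ) • μ + (-1 : ℝ) • μ' = μ - μ' := by
    rw [one_smul, neg_one_smul ℝ μ', sub_eq_add_neg]
  filter_upwards [ae_KV_smul_add_smul hfV 1 (-1) μ μ', h] with z hlin hz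
  rw [hsub] at hlin
  rw [hlin, hz, Pi.zero_apply]
  push_cast
  ring

theorem KV_injective (hfV : Integrable fV) (hφ : ∀ᵐ t, charFn fV t ≠ 0) :
    Function.Injective (KV fV) :=
  fun _ _ h => eq_of_KV_ae_eq hfV hφ (.of_eq h)

theorem sInt_eq_of_KV_eq_add (hfV : Integrable fV) (hφ : ∀ᵐ t, charFn fV t ≠ 0)
    (lam : Ed d →ᵇ ℂ) {a b : ℂ} {μ₁ μ₂ ν : SignedMeasure (Ed d)}
    (h : ∀ z, KV fV ν z = a * KV fV μ₁ z + b * KV fV μ₂ z) :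
    sInt ν lam = a * sInt μ₁ lam + b * sInt μ₂ lam := by
  have hsplit : ∀ z, KV fV ν z = a.re * KV fV μ₁ z + b.re * KV fV μ₂ z ∧
      0 = a.im * KV fV μ₁ z + b.im * KV fV μ₂ z := by
    intro z
    have hz := h z
    rw [KV_apply, KV_apply, KV_apply, Complex.ext_iff] at hz
    simp only [mul_re, mul_im, ofReal_re, ofReal_im, add_re, add_im, mul_zero, sub_zero,
      zero_add] at hz
    rw [KV_apply, KV_apply, KV_apply]
    exact ⟨by exact_mod_cast hz.1, by exact_mod_cast hz.2⟩
  have hre : ν = a.re • μ₁ + b.re • μ₂ := eq_of_KV_ae_eq hfV hφ <| by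
    filter_upwards [ae_KV_smul_add_smul hfV a.re b.re μ₁ μ₂] with z hz
    rw [hz]
    exact (hsplit z).1
  have him : a.im • μ₁ + b.im • μ₂ = 0 := eq_zero_of_KV_ae_eq_zero hfV hφ <| by
    filter_upwards [ae_KV_smul_add_smul hfV a.im b.im μ₁ μ₂] with z hz
    rw [hz]
    exact (hsplit z).2.symm
  have hlin := sInt_smul_add_smul (lam.integrable μ₁.totalVariation)
    (lam.integrable μ₂.totalVariation)
  have hsInt_re := hlin a.re b.re
  have hsInt_im := hlin a.im b.im
  rw [← hre] at hsInt_re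
  rw [him, sInt_zero] at hsInt_im
  rw [hsInt_re]
  linear_combination I * hsInt_im + sInt μ₁ lam * re_add_im a + sInt μ₂ lam * re_add_im b

end KV

section Functional

variable {d : ℕ} {fV : Ed d → ℝ}

def tweedieFunctional (fV : Ed d → ℝ) (lam : Ed d → ℂ) (f : AV fV) : ℂ :=
  sInt f.2.choose lam

theorem tweedieFunctional_apply {lam : Ed d → ℂ} (hinj : Function.Injective (KV fV))
    {f : AV fV} {μ : SignedMeasure (Ed d)} (hμ : (f : Ed d → ℂ) = KV fV μ) :
    tweedieFunctional fV lam f = sInt μ lam := by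
  rw [tweedieFunctional, hinj (f.2.choose_spec.symm.trans hμ)]

end Functional

theorem tweedie_stmt3_general {d : ℕ} (y : Ed d) (g : Ed d → ℝ)
    (fV : Ed d → ℝ) (hfV : IsDensity fV)
    (hφ : ∀ᵐ ω : Ed d ∂volume, charFn fV ω ≠ 0)
    (lam : Ed d → ℂ) (hlam_def : lam = fun x => ((g x * fV (y - x) : ℝ) : ℂ))
    (hlam_cont : Continuous lam)
    (hlam_c0 : Tendsto lam (cocompact (Ed d)) (𝓝 0)) :
    ∃ T : AV fV → ℂ,
      (∀ μ : SignedMeasure (Ed d), T ⟨KV fV μ, ⟨μ, rfl⟩⟩ = sInt μ lam) ∧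
      (∀ (f f' : AV fV) (a b : ℂ)
          (h : (fun z => a * (f : Ed d → ℂ) z + b * (f' : Ed d → ℂ) z) ∈ AV fV),
        T ⟨fun z => a * (f : Ed d → ℂ) z + b * (f' : Ed d → ℂ) z, h⟩
          = a * T f + b * T f') ∧
      (∀ μ : SignedMeasure (Ed d),
        ‖T ⟨KV fV μ, ⟨μ, rfl⟩⟩‖ ≤ (⨆ x : Ed d, ‖lam x‖) * tvNorm μ) ∧
      (∀ T' : AV fV → ℂ,
        (∀ μ : SignedMeasure (Ed d), T' ⟨KV fV μ, ⟨μ, rfl⟩⟩ = sInt μ lam) → T' = T) ∧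
      (∀ (PX : Measure (Ed d)) [IsProbabilityMeasure PX],
        T ⟨KV fV PX.toSignedMeasure, ⟨PX.toSignedMeasure, rfl⟩⟩
            = ((∫ x, g x * fV (y - x) ∂PX : ℝ) : ℂ) ∧
        (0 < (∫ x, fV (y - x) ∂PX) →
          Integrable (fun x => g x * fV (y - x)) PX ∧
          T ⟨KV fV PX.toSignedMeasure, ⟨PX.toSignedMeasure, rfl⟩⟩
              / ((∫ x, fV (y - x) ∂PX : ℝ) : ℂ)
            = ((∫ x, g x * fV (y - x) ∂PX : ℝ) : ℂ)
              / ((∫ x, fV (y - x) ∂PX : ℝ) : ℂ))) := by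
  have hfV_int : Integrable fV := hfV.2.2.1
  have hinj := KV_injective hfV_int hφ
  let F : Ed d →ᵇ ℂ := (⟨⟨lam, hlam_cont⟩, hlam_c0⟩ : ZeroAtInftyContinuousMap (Ed d) ℂ).toBCF
  have hF_le : ∀ x, ‖lam x‖ ≤ ⨆ x, ‖lam x‖ :=
    le_ciSup ⟨‖F‖, by rintro _ ⟨x, rfl⟩; exact F.norm_coe_le_norm x⟩
  have hT : ∀ μ, tweedieFunctional fV lam ⟨KV fV μ, μ, rfl⟩ = sInt μ lam :=
    fun μ => tweedieFunctional_apply hinj rfl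
  refine ⟨tweedieFunctional fV lam, hT, ?_, fun μ => hT μ ▸ norm_sInt_le hF_le μ, ?_, ?_⟩
  · rintro ⟨_, μ₁, rfl⟩ ⟨_, μ₂, rfl⟩ a b ⟨ν, hν⟩
    rw [tweedieFunctional_apply hinj hν, hT, hT]
    exact sInt_eq_of_KV_eq_add hfV_int hφ F fun z => (congrFun hν z).symm
  · intro T' hT'
    funext ⟨_, μ, hμ⟩
    subst hμ
    rw [hT', hT]
  · intro PX _
    have hlam_int : Integrable lam PX := F.integrable PX
    have hPX : tweedieFunctional fV lam ⟨KV fV PX.toSignedMeasure, _, rfl⟩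
        = ((∫ x, g x * fV (y - x) ∂PX : ℝ) : ℂ) := by
      rw [hT, sInt_toSignedMeasure hlam_int, hlam_def, integral_complex_ofReal]
    refine ⟨hPX, fun _ => ⟨?_, by rw [hPX]⟩⟩
    simpa [hlam_def] using hlam_int.re

/-- Existence and uniqueness of the Tweedie functional: for fixed
`y` and measurable `g`, if `λ(x) = g(x) f_V(y - x)` is continuous and vanishes at
infinity, there is a unique bounded linear functional `T` on `A_V(ℝ^d)` with
`T[K_V[μ]] = ∫ λ dμ`; for any latent probability law `P_X`, with `f_Y = K_V[P_X]`,
`T[f_Y] = ∫ g(x) f_V(y - x) dP_X(x)`, and whenever `f_Y(y) > 0` this integral is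
finite and `T[f_Y]/f_Y(y)` is the posterior expectation of `g(X)` given `Y = y`. -/
theorem tweedie_stmt3 {d : ℕ} (y : Ed d) (g : Ed d → ℝ) (hg : Measurable g)
    (fV : Ed d → ℝ) (hfV : IsDensity fV)
    (hφ : ∀ᵐ ω : Ed d ∂volume, charFn fV ω ≠ 0)
    (lam : Ed d → ℂ) (hlam_def : lam = fun x => ((g x * fV (y - x) : ℝ) : ℂ))
    (hlam_cont : Continuous lam)
    (hlam_c0 : Tendsto lam (cocompact (Ed d)) (𝓝 0)) :
    ∃ T : AV fV → ℂ,
      (∀ μ : SignedMeasure (Ed d), T ⟨KV fV μ, ⟨μ, rfl⟩⟩ = sInt μ lam) ∧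
      (∀ (f f' : AV fV) (a b : ℂ)
          (h : (fun z => a * (f : Ed d → ℂ) z + b * (f' : Ed d → ℂ) z) ∈ AV fV),
        T ⟨fun z => a * (f : Ed d → ℂ) z + b * (f' : Ed d → ℂ) z, h⟩
          = a * T f + b * T f') ∧
      (∀ μ : SignedMeasure (Ed d),
        ‖T ⟨KV fV μ, ⟨μ, rfl⟩⟩‖ ≤ (⨆ x : Ed d, ‖lam x‖) * tvNorm μ) ∧
      (∀ T' : AV fV → ℂ,
        (∀ μ : SignedMeasure (Ed d), T' ⟨KV fV μ, ⟨μ, rfl⟩⟩ = sInt μ lam) → T' = T) ∧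
      (∀ (PX : Measure (Ed d)) [IsProbabilityMeasure PX],
        T ⟨KV fV PX.toSignedMeasure, ⟨PX.toSignedMeasure, rfl⟩⟩
            = ((∫ x, g x * fV (y - x) ∂PX : ℝ) : ℂ) ∧
        (0 < (∫ x, fV (y - x) ∂PX) →
          Integrable (fun x => g x * fV (y - x)) PX ∧
          T ⟨KV fV PX.toSignedMeasure, ⟨PX.toSignedMeasure, rfl⟩⟩
              / ((∫ x, fV (y - x) ∂PX : ℝ) : ℂ)
            = ((∫ x, g x * fV (y - x) ∂PX : ℝ) : ℂ)
              / ((∫ x, fV (y - x) ∂PX : ℝ) : ℂ))) :=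
  tweedie_stmt3_general y g fV hfV hφ lam hlam_def hlam_cont hlam_c0
end
end

section
/- Fix y ∈ ℝ^d and a measurable g : ℝ^d → ℝ. Let f_V be a probability density on ℝ^d with φ_V nonzero Lebesgue-a.e., and suppose λ(x) = g(x) f_V(y − x) is continuous, vanishes at infinity, and is integrable with λ̃ ∈ L¹(ℝ^d;ℂ). Define Q(ω) = λ̃(ω)/φ_V(−ω) when φ_V(−ω) ≠ 0 and Q(ω) = 0 otherwise, and assume Q ∈ L¹(ℝ^d;ℂ). Then the inverse Fourier integral Q^♯(z) = (2π)^{−d} ∫ e^{−i⟨ω,z⟩} Q(ω) dω defines a continuous real-valued function vanishing at infinity, and for every finite signed measure μ, ∫_{ℝ^d} λ(x) dμ(x) = ∫_{ℝ^d} Q^♯(z) (f_V * μ)(z) dz. In particular, in the additive-noise model Y = X + V with X ⟂ V, whenever f_Y(y) > 0 the posterior expectation of g(X) given Y = y equals E[Q^♯(Y)] / f_Y(y). -/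
open MeasureTheory Filter Topology

noncomputable section

/-- Fourier transform `ψ̃(ω) = ∫ e^{i⟨ω,x⟩} ψ(x) dx`. -/
def ftil {d : ℕ} (f : Ed d → ℂ) (ω : Ed d) : ℂ :=
  ∫ x, Complex.exp (Complex.I * ((inner ℝ ω x : ℝ) : ℂ)) * f x

/-- Inverse Fourier integral `ψ^♯(x) = (2π)^{-d} ∫ e^{-i⟨ω,x⟩} ψ(ω) dω`. -/
def fsharp {d : ℕ} (f : Ed d → ℂ) (x : Ed d) : ℂ :=
  (((2 * Real.pi) ^ d : ℝ) : ℂ)⁻¹ *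
    ∫ ω, Complex.exp (-(Complex.I * ((inner ℝ ω x : ℝ) : ℂ))) * f ω

/-!
Because `λ` and `f_V` are real, `λ̃` and `φ_V` are Hermitian symmetric, hence so is `Q`, and
`Q^♯` is real; its continuity and decay at infinity are the Riemann–Lebesgue lemma.
For the representation, the multiplication formula `∫ Q^♯ h = (2π)^{-d} ∫ Q(ω) h̃(-ω) dω`
with `h = f_V(· - x)`, whose transform at `-ω` is `e^{-i⟨ω,x⟩} φ_V(-ω)`, turns
`∫ Q^♯(z) f_V(z - x) dz` into `(Q φ_V(-·))^♯(x) = λ̃^♯(x)`, which is `λ(x)` by Fourier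
inversion. Integrating in `x` against the Jordan parts of `μ` and exchanging the integrals
(`Q^♯` is bounded, `f_V` integrable) gives the identity for signed measures, and `μ = P_X`
gives the posterior formula.
-/

open scoped FourierTransform RealInnerProductSpace ComplexConjugate

section FourierConventions

variable {d : ℕ}

lemma norm_exp_neg_I_mul_ofReal (t : ℝ) : ‖Complex.exp (-(Complex.I * t))‖ = 1 := by
  rw [← mul_neg, ← Complex.ofReal_neg, mul_comm, Complex.norm_exp_ofReal_mul_I]

lemma ftil_smul_eq_fourier (f : Ed d → ℂ) (w : Ed d) :
    ftil f (-(2 * Real.pi) • w) = 𝓕 f w := by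
  rw [Real.fourier_eq']
  refine integral_congr_ae (Eventually.of_forall fun v => ?_)
  simp only [real_inner_smul_left, real_inner_comm w v, smul_eq_mul]
  push_cast
  ring_nf

lemma fsharp_eq_fourier (f : Ed d → ℂ) (x : Ed d) :
    fsharp f x = 𝓕 (fun u => f ((2 * Real.pi) • u)) x := by
  set G : Ed d → ℂ := fun ω => Complex.exp (-(Complex.I * ⟪ω, x⟫)) * f ω
  have hG : ∀ u : Ed d, Complex.exp (((-2 * Real.pi * ⟪u, x⟫ : ℝ) : ℂ) * Complex.I) •
      f ((2 * Real.pi) • u) = G ((2 * Real.pi) • u) := fun u => by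
    simp only [G, real_inner_smul_left, smul_eq_mul]
    push_cast
    ring_nf
  rw [Real.fourier_eq', integral_congr_ae (Eventually.of_forall hG),
    Measure.integral_comp_smul, finrank_euclideanSpace_fin, abs_of_nonneg (by positivity),
    Complex.real_smul, fsharp]
  push_cast
  rfl

lemma fsharp_eq_ftil (f : Ed d → ℂ) (x : Ed d) :
    fsharp f x = (((2 * Real.pi) ^ d : ℝ) : ℂ)⁻¹ * ftil f (-x) := by
  rw [fsharp, ftil]
  congr 1
  refine integral_congr_ae (Eventually.of_forall fun ω => ?_)
  simp only [inner_neg_left, real_inner_comm x ω]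
  push_cast
  ring_nf

lemma fsharp_ftil {f : Ed d → ℂ} (hc : Continuous f) (hf : Integrable f)
    (hf' : Integrable (ftil f)) : fsharp (ftil f) = f := by
  have hF : Integrable (𝓕 f) := by
    simp_rw [← funext (ftil_smul_eq_fourier f)]
    exact hf'.comp_smul (neg_ne_zero.2 Real.two_pi_pos.ne')
  have hflip : (fun u => ftil f ((2 * Real.pi) • u)) = fun u => 𝓕 f (-u) := funext fun u => by
    rw [← ftil_smul_eq_fourier, smul_neg, neg_smul, neg_neg]
  ext x
  rw [fsharp_eq_fourier, hflip, ← Real.fourierInv_eq_fourier_comp_neg,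
    hf.fourierInv_fourier_eq hF hc.continuousAt]

lemma continuous_fsharp {f : Ed d → ℂ} (hf : Integrable f) : Continuous (fsharp f) := by
  rw [funext (fsharp_eq_fourier f)]
  exact VectorFourier.fourierIntegral_continuous Real.continuous_fourierChar continuous_inner
    (hf.comp_smul (by positivity))

lemma tendsto_fsharp_cocompact (f : Ed d → ℂ) :
    Tendsto (fsharp f) (cocompact (Ed d)) (𝓝 0) := by
  rw [funext (fsharp_eq_fourier f)]
  exact tendsto_integral_exp_inner_smul_cocompact _

lemma norm_fsharp_le (f : Ed d → ℂ) (x : Ed d) :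
    ‖fsharp f x‖ ≤ ((2 * Real.pi) ^ d)⁻¹ * ∫ ω, ‖f ω‖ := by
  rw [fsharp, norm_mul, norm_inv, Complex.norm_real, Real.norm_of_nonneg (by positivity)]
  gcongr
  refine (norm_integral_le_integral_norm _).trans_eq ?_
  simp only [norm_mul, norm_exp_neg_I_mul_ofReal, one_mul]

lemma conj_ftil (f : Ed d → ℂ) (ω : Ed d) :
    conj (ftil f ω) = ftil (fun x => conj (f x)) (-ω) := by
  rw [ftil, ftil, ← integral_conj]
  refine integral_congr_ae (Eventually.of_forall fun x => ?_)
  simp only [map_mul, ← Complex.exp_conj, Complex.conj_I, Complex.conj_ofReal, inner_neg_left]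
  push_cast
  ring_nf

lemma ftil_comp_neg (f : Ed d → ℂ) (ω : Ed d) :
    ftil (fun x => f (-x)) ω = ftil f (-ω) := by
  rw [ftil, ftil, ← integral_neg_eq_self]
  simp only [inner_neg_left, inner_neg_right, neg_neg]

lemma conj_ftil_of_real {f : Ed d → ℂ} (hf : ∀ x, conj (f x) = f x) (ω : Ed d) :
    conj (ftil f ω) = ftil f (-ω) := by
  simp only [conj_ftil, hf]

lemma conj_ftil_of_hermitian {f : Ed d → ℂ} (hf : ∀ x, conj (f x) = f (-x)) (ω : Ed d) :
    conj (ftil f ω) = ftil f ω := by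
  rw [conj_ftil, funext hf, ftil_comp_neg, neg_neg]

lemma fsharp_im_eq_zero {f : Ed d → ℂ} (hf : ∀ ω, conj (f ω) = f (-ω)) (x : Ed d) :
    (fsharp f x).im = 0 := by
  rw [fsharp_eq_ftil, ← Complex.ofReal_inv, Complex.im_ofReal_mul,
    Complex.conj_eq_iff_im.mp (conj_ftil_of_hermitian hf _), mul_zero]

lemma ftil_comp_sub_right (f : Ed d → ℂ) (a ω : Ed d) :
    ftil (fun x => f (x - a)) ω = Complex.exp (Complex.I * ⟪ω, a⟫) * ftil f ω := by
  rw [ftil, ftil, ← integral_add_right_eq_self _ a, ← integral_const_mul]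
  refine integral_congr_ae (Eventually.of_forall fun x => ?_)
  simp only [add_sub_cancel_right, inner_add_right]
  push_cast
  rw [mul_add, Complex.exp_add]
  ring

lemma integral_fsharp_mul {Q h : Ed d → ℂ} (hQ : Integrable Q) (hh : Integrable h) :
    ∫ z, fsharp Q z * h z =
      (((2 * Real.pi) ^ d : ℝ) : ℂ)⁻¹ * ∫ ω, Q ω * ftil h (-ω) := by
  set c : ℂ := (((2 * Real.pi) ^ d : ℝ) : ℂ)⁻¹
  set e : Ed d → Ed d → ℂ := fun ω z => Complex.exp (-(Complex.I * ⟪ω, z⟫))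
  have he : Continuous fun p : Ed d × Ed d => e p.2 p.1 := by fun_prop
  have hprod : Integrable (Function.uncurry fun z ω => e ω z * (h z * Q ω))
      (volume.prod volume) :=
    (hh.mul_prod hQ).bdd_mul he.aestronglyMeasurable
      (Eventually.of_forall fun p => (norm_exp_neg_I_mul_ofReal _).le)
  calc ∫ z, fsharp Q z * h z = ∫ z, c * ∫ ω, e ω z * (h z * Q ω) := by
        refine integral_congr_ae (Eventually.of_forall fun z => ?_)
        simp only [fsharp, mul_assoc, ← integral_mul_const]
        congr 2 with ω
        ring
    _ = c * ∫ ω, ∫ z, e ω z * (h z * Q ω) := by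
        rw [integral_const_mul, integral_integral_swap hprod]
    _ = c * ∫ ω, Q ω * ftil h (-ω) := by
        congr 1
        refine integral_congr_ae (Eventually.of_forall fun ω => ?_)
        simp only [ftil, ← integral_const_mul, e, inner_neg_left]
        congr 1 with z
        push_cast
        ring_nf

lemma integral_fsharp_mul_comp_sub {k lam Q : Ed d → ℂ} (hk : Integrable k)
    (hlam_cont : Continuous lam) (hlam_int : Integrable lam)
    (hlamtil_int : Integrable (ftil lam)) (hQ : Integrable Q)
    (hQk : ∀ᵐ ω, Q ω * ftil k (-ω) = ftil lam ω) (x : Ed d) :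
    ∫ z, fsharp Q z * k (z - x) = lam x := by
  rw [integral_fsharp_mul hQ (hk.comp_sub_right x)]
  simp only [ftil_comp_sub_right, inner_neg_left]
  calc _ = fsharp (ftil lam) x := by
        rw [fsharp]
        congr 1
        refine integral_congr_ae (hQk.mono fun ω hω => ?_)
        simp only [← hω, Complex.ofReal_neg]
        ring_nf
    _ = lam x := by rw [fsharp_ftil hlam_cont hlam_int hlamtil_int]

end FourierConventions

section Mixtures

variable {G : Type*} [AddGroup G] [MeasurableSpace G] [MeasurableAdd G] [MeasurableSub₂ G]
  {μ : Measure G} [SFinite μ] [μ.IsAddRightInvariant] {F k : G → ℂ} {C : ℝ}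

lemma integrable_prod_mul_comp_sub (hF : AEStronglyMeasurable F μ) (hFC : ∀ z, ‖F z‖ ≤ C)
    (hk_meas : Measurable k) (hk : Integrable k μ) (ν : Measure G) [IsFiniteMeasure ν] :
    Integrable (fun p : G × G => F p.2 * k (p.2 - p.1)) (ν.prod μ) := by
  have hk_prod : Integrable (fun p : G × G => k (p.2 - p.1)) (ν.prod μ) := by
    have hk_meas' : Measurable fun p : G × G => k (p.2 - p.1) :=
      hk_meas.comp (measurable_snd.sub measurable_fst)
    refine (integrable_prod_iff hk_meas'.aestronglyMeasurable).2
      ⟨Eventually.of_forall fun x => hk.comp_sub_right x, ?_⟩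
    convert integrable_const (μ := ν) (∫ z, ‖k z‖ ∂μ) using 2 with x
    exact integral_sub_right_eq_self (fun z => ‖k z‖) x
  exact hk_prod.bdd_mul hF.comp_snd (Eventually.of_forall fun p => hFC p.2)

lemma integral_integral_mul_comp_sub (hF : AEStronglyMeasurable F μ) (hFC : ∀ z, ‖F z‖ ≤ C)
    (hk_meas : Measurable k) (hk : Integrable k μ) (ν : Measure G) [IsFiniteMeasure ν] :
    ∫ x, (∫ z, F z * k (z - x) ∂μ) ∂ν = ∫ z, F z * ∫ x, k (z - x) ∂ν ∂μ := by
  rw [integral_integral_swap (integrable_prod_mul_comp_sub hF hFC hk_meas hk ν)]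
  simp only [integral_const_mul]

lemma integrable_mul_integral_comp_sub (hF : AEStronglyMeasurable F μ) (hFC : ∀ z, ‖F z‖ ≤ C)
    (hk_meas : Measurable k) (hk : Integrable k μ) (ν : Measure G) [IsFiniteMeasure ν] :
    Integrable (fun z => F z * ∫ x, k (z - x) ∂ν) μ := by
  simpa only [integral_const_mul] using
    (integrable_prod_mul_comp_sub hF hFC hk_meas hk ν).integral_prod_right

lemma integral_eq_integral_re_mul_integral_comp_sub {fV ℓ : G → ℝ}
    (hF : AEStronglyMeasurable F μ) (hFC : ∀ z, ‖F z‖ ≤ C) (hfV_meas : Measurable fV)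
    (hfV_int : Integrable fV μ) (hrepr : ∀ x, ∫ z, F z * fV (z - x) ∂μ = ℓ x)
    (ν : Measure G) [IsFiniteMeasure ν] :
    ∫ x, ℓ x ∂ν = ∫ z, (F z).re * ∫ x, fV (z - x) ∂ν ∂μ := by
  have hk_meas : Measurable fun v => (fV v : ℂ) := Complex.measurable_ofReal.comp hfV_meas
  have hint := integrable_mul_integral_comp_sub hF hFC hk_meas hfV_int.ofReal ν
  have h := integral_integral_mul_comp_sub hF hFC hk_meas hfV_int.ofReal ν
  simp only [hrepr, integral_complex_ofReal] at h hint
  apply_fun Complex.re at h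
  rw [Complex.ofReal_re, ← RCLike.re_eq_complex_re, ← integral_re hint] at h
  simpa only [RCLike.re_to_complex, Complex.re_mul_ofReal] using h

end Mixtures

lemma conj_ite_div {E : Type*} [Neg E] {a b : E → ℂ} (ha : ∀ ω, conj (a ω) = a (-ω))
    (hb : ∀ ω, conj (b ω) = b (-ω)) (ω : E) :
    conj (if b ω ≠ 0 then a ω / b ω else 0) = if b (-ω) ≠ 0 then a (-ω) / b (-ω) else 0 := by
  simp only [← ha, ← hb, map_ne_zero, apply_ite conj, map_div₀, map_zero]

lemma sInt_eq_integral_mul_KV {d : ℕ} {fV : Ed d → ℝ} {F lam : Ed d → ℂ} {C : ℝ}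
    (hF : AEStronglyMeasurable F) (hFC : ∀ z, ‖F z‖ ≤ C) (hfV_meas : Measurable fV)
    (hfV_int : Integrable fV) (hrepr : ∀ x, ∫ z, F z * fV (z - x) = lam x)
    (μ : SignedMeasure (Ed d)) :
    sInt μ lam = ∫ z, F z * KV fV μ z := by
  have hk_meas : Measurable fun v => (fV v : ℂ) := Complex.measurable_ofReal.comp hfV_meas
  have hk := hfV_int.ofReal (𝕜 := ℂ)
  simp only [sInt, KV, mul_sub]
  rw [integral_sub (integrable_mul_integral_comp_sub hF hFC hk_meas hk _)
    (integrable_mul_integral_comp_sub hF hFC hk_meas hk _)]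
  simp only [← hrepr, integral_integral_mul_comp_sub hF hFC hk_meas hk]

theorem tweedie_stmt13_general {d : ℕ} (y : Ed d) (g : Ed d → ℝ)
    (fV : Ed d → ℝ) (hfV : IsDensity fV)
    (hφ : ∀ᵐ ω : Ed d ∂volume, charFn fV ω ≠ 0)
    (lam : Ed d → ℂ) (hlam_def : lam = fun x => ((g x * fV (y - x) : ℝ) : ℂ))
    (hlam_cont : Continuous lam)
    (hlam_int : Integrable lam)
    (hlamtil_int : Integrable (ftil lam))
    (Q : Ed d → ℂ)
    (hQ_def : ∀ ω : Ed d,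
      Q ω = if charFn fV (-ω) ≠ 0 then ftil lam ω / charFn fV (-ω) else 0)
    (hQ_int : Integrable Q) :
    Continuous (fsharp Q) ∧
    (∀ z : Ed d, (fsharp Q z).im = 0) ∧
    Tendsto (fsharp Q) (cocompact (Ed d)) (𝓝 0) ∧
    (∀ μ : SignedMeasure (Ed d),
      sInt μ lam = ∫ z, fsharp Q z * KV fV μ z) ∧
    (∀ (PX : Measure (Ed d)) [IsProbabilityMeasure PX],
      0 < (∫ x, fV (y - x) ∂PX) →
      (∫ x, g x * fV (y - x) ∂PX) / (∫ x, fV (y - x) ∂PX)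
        = (∫ z, (fsharp Q z).re * (∫ x, fV (z - x) ∂PX))
            / (∫ x, fV (y - x) ∂PX)) := by
  obtain ⟨hfV_meas, -, hfV_int, -⟩ := hfV
  have hQφ : ∀ᵐ ω, Q ω * charFn fV (-ω) = ftil lam ω := by
    filter_upwards [(Measure.measurePreserving_neg volume).quasiMeasurePreserving.ae hφ]
      with ω hω
    rw [hQ_def, if_pos hω, div_mul_cancel₀ _ hω]
  have hrepr := integral_fsharp_mul_comp_sub hfV_int.ofReal hlam_cont hlam_int hlamtil_int
    hQ_int hQφ
  have hlam_real : ∀ x, conj (lam x) = lam x := fun x => by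
    rw [hlam_def]
    exact Complex.conj_ofReal _
  -- `charFn fV` is by definition `ftil` of `fV` read in `ℂ`
  have hφ_herm : ∀ ω, conj (charFn fV (-ω)) = charFn fV (-(-ω)) := fun ω =>
    conj_ftil_of_real (fun v => Complex.conj_ofReal _) (-ω)
  have hQ_herm : ∀ ω, conj (Q ω) = Q (-ω) := fun ω => by
    rw [hQ_def, hQ_def]
    exact conj_ite_div (b := fun ω => charFn fV (-ω)) (conj_ftil_of_real hlam_real) hφ_herm ω
  have hF : AEStronglyMeasurable (fsharp Q) := (continuous_fsharp hQ_int).aestronglyMeasurable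
  refine ⟨continuous_fsharp hQ_int, fsharp_im_eq_zero hQ_herm, tendsto_fsharp_cocompact Q,
    sInt_eq_integral_mul_KV hF (norm_fsharp_le Q) hfV_meas hfV_int hrepr, fun PX _ _ => ?_⟩
  congr 1
  exact integral_eq_integral_re_mul_integral_comp_sub hF (norm_fsharp_le Q) hfV_meas hfV_int
    (fun x => (hrepr x).trans (congrFun hlam_def x)) PX

/-- Tweedie representation via expectations: if the
Fourier-domain representer `Q = λ̃/φ_V(−·)` (set to `0` at zeros of `φ_V(−·)`)
is integrable, then `Q^♯` is a continuous real-valued function vanishing at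
infinity, `∫ λ dμ = ∫ Q^♯(z) (f_V*μ)(z) dz` for every finite signed measure `μ`,
and in the additive-noise model, whenever `f_Y(y) > 0` the posterior expectation
of `g(X)` given `Y = y` equals `E[Q^♯(Y)]/f_Y(y) = (∫ Q^♯(z) f_Y(z) dz)/f_Y(y)`. -/
theorem tweedie_stmt13 {d : ℕ} (y : Ed d) (g : Ed d → ℝ) (hg : Measurable g)
    (fV : Ed d → ℝ) (hfV : IsDensity fV)
    (hφ : ∀ᵐ ω : Ed d ∂volume, charFn fV ω ≠ 0)
    (lam : Ed d → ℂ) (hlam_def : lam = fun x => ((g x * fV (y - x) : ℝ) : ℂ))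
    (hlam_cont : Continuous lam)
    (hlam_c0 : Tendsto lam (cocompact (Ed d)) (𝓝 0))
    (hlam_int : Integrable lam)
    (hlamtil_int : Integrable (ftil lam))
    (Q : Ed d → ℂ)
    (hQ_def : ∀ ω : Ed d,
      Q ω = if charFn fV (-ω) ≠ 0 then ftil lam ω / charFn fV (-ω) else 0)
    (hQ_int : Integrable Q) :
    Continuous (fsharp Q) ∧
    (∀ z : Ed d, (fsharp Q z).im = 0) ∧
    Tendsto (fsharp Q) (cocompact (Ed d)) (𝓝 0) ∧
    (∀ μ : SignedMeasure (Ed d),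
      sInt μ lam = ∫ z, fsharp Q z * KV fV μ z) ∧
    (∀ (PX : Measure (Ed d)) [IsProbabilityMeasure PX],
      0 < (∫ x, fV (y - x) ∂PX) →
      (∫ x, g x * fV (y - x) ∂PX) / (∫ x, fV (y - x) ∂PX)
        = (∫ z, (fsharp Q z).re * (∫ x, fV (z - x) ∂PX))
            / (∫ x, fV (y - x) ∂PX)) :=
  tweedie_stmt13_general y g fV hfV hφ lam hlam_def hlam_cont hlam_int hlamtil_int Q hQ_def hQ_int
end
end

section
/- Let Y = X + V with X independent of V on ℝ^d, where the density f_V of V belongs to C_0^k(ℝ^d;ℝ) and φ_V is nonzero Lebesgue-a.e. Let g : ℝ^d → ℝ be measurable with ∫ |g(x)| dP_X(x) < ∞. Define N_g(y) := ∫_{ℝ^d} g(x) f_V(y − x) dP_X(x) and f_Y(y) := ∫ f_V(y − x) dP_X(x). Then N_g ∈ Ξ^k(ℝ^d;ℂ), f_Y(Y) > 0 almost surely, and the conditional expectation satisfies E[g(X) | Y] = N_g(Y) / f_Y(Y) almost surely. -/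
/-!
Independence makes the law of `(X, V)` a product measure, and the shear `(x, v) ↦ (x, x + v)`
preserves `P_X ⊗ Lebesgue`; hence the joint law of `(X, Y)` has density `f_V(y - x)` with
respect to `P_X ⊗ Lebesgue`. Consequently `Y` has density `f_Y`, so `f_Y(Y) > 0` almost surely,
and Fubini gives `∫_{Y ∈ B} g(X) dP = ∫_B N_g`, which identifies `N_g(Y) / f_Y(Y)` as
`E[g(X) | Y]`. The regularity of `N_g` comes from differentiating under the integral sign: the
derivatives of `f_V` of order at most `k` vanish at infinity, hence are bounded, so dominated
convergence applies, and it also carries their decay at infinity over to the derivatives of `N_g`.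
-/

open MeasureTheory Filter Topology

noncomputable section

/-- Membership in `Ξ^k(ℝ^d;ℂ) = C_0^k(ℝ^d;ℂ) ∩ L¹(ℝ^d;ℂ)`: `k`-times continuously
differentiable, all derivatives of order `≤ k` vanish at infinity, and integrable. -/
def XiMem {d : ℕ} (k : ℕ) (ψ : Ed d → ℂ) : Prop :=
  ContDiff ℝ (k : ℕ∞) ψ ∧
    (∀ n : ℕ, n ≤ k →
      Tendsto (fun x => ‖iteratedFDeriv ℝ n ψ x‖) (cocompact (Ed d)) (𝓝 0)) ∧
    Integrable ψ

/-- The `Ξ^k`-norm `‖ψ‖_{Ξ^k} = max_{|α|≤k} ‖∂^α ψ‖_∞ + ‖ψ‖₁`. -/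
def XiNorm {d : ℕ} (k : ℕ) (ψ : Ed d → ℂ) : ℝ :=
  (⨆ n : Fin (k + 1), ⨆ x : Ed d, ‖iteratedFDeriv ℝ (n : ℕ) ψ x‖) + ∫ x, ‖ψ x‖

open ProbabilityTheory

theorem exists_norm_le_of_tendsto_cocompact {X F : Type*} [TopologicalSpace X]
    [NormedAddCommGroup F] {f : X → F}
    (hf : Continuous f) (h : Tendsto f (cocompact X) (𝓝 0)) : ∃ C, ∀ x, ‖f x‖ ≤ C :=
  let f₀ : ZeroAtInftyContinuousMap X F := ⟨⟨f, hf⟩, h⟩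
  ⟨‖f₀.toBCF‖, f₀.toBCF.norm_coe_le_norm⟩

theorem ContinuousLinearEquiv.integral_smul_comm {X E F : Type*} [MeasurableSpace X]
    {μ : Measure X} [NormedAddCommGroup E] [NormedSpace ℝ E] [NormedAddCommGroup F]
    [NormedSpace ℝ F] (L : E ≃L[ℝ] F) (w : X → ℝ) (Φ : X → E) :
    L (∫ x, w x • Φ x ∂μ) = ∫ x, w x • L (Φ x) ∂μ := by
  simp_rw [← L.map_smul]
  exact (L.integral_comp_comm _).symm

section Convolution

variable {G E : Type*} [NormedAddCommGroup G] [MeasurableSpace G] [BorelSpace G]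
  [SecondCountableTopology G] [NormedAddCommGroup E] [NormedSpace ℝ E]
  {μ : Measure G} {w : G → ℝ}

theorem integrable_smul_comp_sub (hw : Integrable w μ) {Φ : G → E} (hΦ : Continuous Φ) {C : ℝ}
    (hC : ∀ y, ‖Φ y‖ ≤ C) (z : G) : Integrable (fun x => w x • Φ (z - x)) μ :=
  (hw.norm.mul_const C).mono' (hw.aestronglyMeasurable.smul (by fun_prop : Continuous
    fun x => Φ (z - x)).aestronglyMeasurable) (ae_of_all _ fun x => by
      rw [norm_smul]; gcongr; exact hC _)

theorem continuous_integral_smul_comp_sub (hw : Integrable w μ) {Φ : G → E} (hΦ : Continuous Φ)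
    {C : ℝ} (hC : ∀ y, ‖Φ y‖ ≤ C) : Continuous fun z => ∫ x, w x • Φ (z - x) ∂μ :=
  continuous_of_dominated (fun z => (integrable_smul_comp_sub hw hΦ hC z).aestronglyMeasurable)
    (fun z => ae_of_all _ fun x => by rw [norm_smul]; gcongr; exact hC _)
    (hw.norm.mul_const C) (ae_of_all _ fun x => by fun_prop)

theorem tendsto_integral_smul_comp_sub_cocompact [ProperSpace G] (hw : Integrable w μ)
    {Φ : G → E} (hΦ : Continuous Φ) {C : ℝ} (hC : ∀ y, ‖Φ y‖ ≤ C)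
    (hΦ₀ : Tendsto Φ (cocompact G) (𝓝 0)) :
    Tendsto (fun z => ∫ x, w x • Φ (z - x) ∂μ) (cocompact G) (𝓝 0) := by
  have : (cocompact G).IsCountablyGenerated := by
    rw [← Metric.cobounded_eq_cocompact, ← comap_norm_atTop]
    infer_instance
  simpa using tendsto_integral_filter_of_dominated_convergence (f := fun _ => (0 : E))
    (fun x => ‖w x‖ * C)
    (.of_forall fun z => (integrable_smul_comp_sub hw hΦ hC z).aestronglyMeasurable)
    (.of_forall fun z => ae_of_all _ fun x => by rw [norm_smul]; gcongr; exact hC _)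
    (hw.norm.mul_const C) (ae_of_all _ fun x => by
      simpa using (hΦ₀.comp (Homeomorph.subRight x).map_cocompact.le).const_smul (w x))

variable [NormedSpace ℝ G]

theorem hasFDerivAt_integral_smul_comp_sub (hw : Integrable w μ) {Φ : G → E}
    (hΦ : Differentiable ℝ Φ) (hΦ' : Continuous (fderiv ℝ Φ)) {C₀ C₁ : ℝ}
    (hC₀ : ∀ y, ‖Φ y‖ ≤ C₀) (hC₁ : ∀ y, ‖fderiv ℝ Φ y‖ ≤ C₁) (z₀ : G) :
    HasFDerivAt (fun z => ∫ x, w x • Φ (z - x) ∂μ) (∫ x, w x • fderiv ℝ Φ (z₀ - x) ∂μ) z₀ := by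
  refine hasFDerivAt_integral_of_dominated_of_fderiv_le (bound := fun x => ‖w x‖ * C₁)
    (F' := fun z x => w x • fderiv ℝ Φ (z - x)) (Metric.ball_mem_nhds z₀ one_pos)
    (.of_forall fun z => (integrable_smul_comp_sub hw hΦ.continuous hC₀ z).aestronglyMeasurable)
    (integrable_smul_comp_sub hw hΦ.continuous hC₀ z₀)
    (integrable_smul_comp_sub hw hΦ' hC₁ z₀).aestronglyMeasurable
    (ae_of_all _ fun x z _ => by rw [norm_smul]; gcongr; exact hC₁ _)
    (hw.norm.mul_const C₁) (ae_of_all _ fun x z _ => ?_)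
  simpa [Function.comp_def, Pi.smul_def] using
    ((hΦ (z - x)).hasFDerivAt.comp z ((hasFDerivAt_id z).sub_const x)).const_smul (w x)

section Smooth

variable {n : ℕ∞} {f : G → E} (hw : Integrable w μ) (hf : ContDiff ℝ n f)
  (hb : ∀ m : ℕ, m ≤ n → ∃ C, ∀ y, ‖iteratedFDeriv ℝ m f y‖ ≤ C)
include hw hf hb

theorem hasFDerivAt_integral_smul_iteratedFDeriv_comp_sub {m : ℕ} (hm : m < n) (z : G) :
    HasFDerivAt (fun z => ∫ x, w x • iteratedFDeriv ℝ m f (z - x) ∂μ)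
      (∫ x, w x • fderiv ℝ (iteratedFDeriv ℝ m f) (z - x) ∂μ) z := by
  obtain ⟨C₀, hC₀⟩ := hb m hm.le
  obtain ⟨C₁, hC₁⟩ := hb (m + 1) (Order.add_one_le_of_lt hm)
  refine hasFDerivAt_integral_smul_comp_sub hw (hf.differentiable_iteratedFDeriv
    (by exact_mod_cast hm)) ?_ hC₀ (fun y => norm_fderiv_iteratedFDeriv.trans_le (hC₁ y)) z
  rw [fderiv_iteratedFDeriv]
  exact (LinearIsometryEquiv.continuous _).comp (hf.continuous_iteratedFDeriv
    (by exact_mod_cast Order.add_one_le_of_lt hm))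

theorem iteratedFDeriv_integral_smul_comp_sub {m : ℕ} (hm : m ≤ n) :
    iteratedFDeriv ℝ m (fun z => ∫ x, w x • f (z - x) ∂μ) =
      fun z => ∫ x, w x • iteratedFDeriv ℝ m f (z - x) ∂μ := by
  induction m with
  | zero =>
    ext1 z
    simp only [iteratedFDeriv_zero_eq_comp, Function.comp_apply]
    exact (continuousMultilinearCurryFin0 ℝ G E).symm.toContinuousLinearEquiv.integral_smul_comm _ _
  | succ m ih =>
    have hmn : (m : ℕ∞) < n := lt_of_lt_of_le (by exact_mod_cast m.lt_succ_self) hm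
    ext1 z
    rw [iteratedFDeriv_succ_eq_comp_left, ih hmn.le, Function.comp_apply,
      (hasFDerivAt_integral_smul_iteratedFDeriv_comp_sub hw hf hb hmn z).fderiv]
    simp only [iteratedFDeriv_succ_eq_comp_left, Function.comp_apply]
    exact ContinuousLinearEquiv.integral_smul_comm (E := G →L[ℝ] G [×m]→L[ℝ] E)
      (F := G [×m + 1]→L[ℝ] E) (μ := μ)
      (continuousMultilinearCurryLeftEquiv ℝ (fun _ => G) E).symm.toContinuousLinearEquiv _ _

theorem contDiff_integral_smul_comp_sub : ContDiff ℝ n fun z => ∫ x, w x • f (z - x) ∂μ := by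
  refine contDiff_iff_continuous_differentiable.mpr ⟨fun m hm => ?_, fun m hm => ?_⟩
  · obtain ⟨C, hC⟩ := hb m hm
    rw [iteratedFDeriv_integral_smul_comp_sub hw hf hb hm]
    exact continuous_integral_smul_comp_sub hw
      (hf.continuous_iteratedFDeriv (by exact_mod_cast hm)) hC
  · rw [iteratedFDeriv_integral_smul_comp_sub hw hf hb hm.le]
    exact fun z =>
      (hasFDerivAt_integral_smul_iteratedFDeriv_comp_sub hw hf hb hm z).differentiableAt

theorem tendsto_iteratedFDeriv_integral_smul_comp_sub_cocompact [ProperSpace G]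
    (hf₀ : ∀ m : ℕ, m ≤ n → Tendsto (iteratedFDeriv ℝ m f) (cocompact G) (𝓝 0))
    {m : ℕ} (hm : m ≤ n) :
    Tendsto (iteratedFDeriv ℝ m fun z => ∫ x, w x • f (z - x) ∂μ) (cocompact G) (𝓝 0) := by
  obtain ⟨C, hC⟩ := hb m hm
  rw [iteratedFDeriv_integral_smul_comp_sub hw hf hb hm]
  exact tendsto_integral_smul_comp_sub_cocompact hw
    (hf.continuous_iteratedFDeriv (by exact_mod_cast hm)) hC (hf₀ m hm)

end Smooth

end Convolution

theorem MeasureTheory.Integrable.comp_fst_map {Ω α β E : Type*} [MeasurableSpace Ω]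
    [MeasurableSpace α] [MeasurableSpace β] [NormedAddCommGroup E] {P : Measure Ω} {f : Ω → α × β}
    (hf : AEMeasurable f P) {g : α → E} (hg : Integrable g (P.map fun ω => (f ω).1)) :
    Integrable (fun p => g p.1) (P.map f) := by
  have hg' : AEStronglyMeasurable g ((P.map f).map Prod.fst) := by
    rw [AEMeasurable.map_map_of_aemeasurable measurable_fst.aemeasurable hf]
    exact hg.aestronglyMeasurable
  exact (integrable_map_measure (hg'.comp_aemeasurable measurable_fst.aemeasurable) hf).mpr
    ((integrable_map_measure hg.aestronglyMeasurable (measurable_fst.comp_aemeasurable hf)).mp hg)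

section AdditiveNoise

variable {Ω G : Type*} [MeasurableSpace Ω] {P : Measure Ω} [IsFiniteMeasure P]
  [AddCommGroup G] [MeasurableSpace G] [MeasurableAdd₂ G] [MeasurableSub₂ G]
  {ν : Measure G} [SFinite ν] [ν.IsAddLeftInvariant] {X V : Ω → G} {ρ : G → ℝ}

theorem map_prodMk_add_eq_withDensity (hX : Measurable X) (hV : Measurable V)
    (hXV : IndepFun X V P) (hρ : Measurable ρ)
    (hV_law : P.map V = ν.withDensity fun v => ENNReal.ofReal (ρ v)) :
    P.map (fun ω => (X ω, X ω + V ω)) =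
      ((P.map X).prod ν).withDensity fun p => ENNReal.ofReal (ρ (p.2 - p.1)) := by
  ext s hs
  have hshear : Measurable fun p : G × G => (p.1, p.1 + p.2) := by fun_prop
  rw [Measure.map_apply (by fun_prop) hs, withDensity_apply _ hs,
    show (fun ω => (X ω, X ω + V ω)) ⁻¹' s =
      (fun ω => (X ω, V ω)) ⁻¹' ((fun p : G × G => (p.1, p.1 + p.2)) ⁻¹' s) from rfl,
    ← Measure.map_apply (hX.prodMk hV) (hshear hs),
    (indepFun_iff_map_prod_eq_prod_map_map hX.aemeasurable hV.aemeasurable).mp hXV, hV_law,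
    prod_withDensity_right (by fun_prop), withDensity_apply _ (hshear hs),
    ← (measurePreserving_prod_add _ ν).setLIntegral_comp_preimage hs (by fun_prop)]
  simp

theorem map_add_eq_withDensity (hX : Measurable X) (hV : Measurable V)
    (hXV : IndepFun X V P) (hρ : Measurable ρ)
    (hV_law : P.map V = ν.withDensity fun v => ENNReal.ofReal (ρ v)) :
    P.map (X + V) = ν.withDensity fun y => ∫⁻ x, ENNReal.ofReal (ρ (y - x)) ∂P.map X := by
  ext B hB
  have hs : MeasurableSet (Prod.snd ⁻¹' B : Set (G × G)) := measurable_snd hB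
  rw [show X + V = Prod.snd ∘ fun ω => (X ω, X ω + V ω) from rfl,
    ← Measure.map_map measurable_snd (by fun_prop), Measure.map_apply measurable_snd hB,
    map_prodMk_add_eq_withDensity hX hV hXV hρ hV_law, withDensity_apply _ hs,
    withDensity_apply _ hB, ← Set.univ_prod, ← Measure.prod_restrict, Measure.restrict_univ,
    lintegral_prod_symm _ (by fun_prop)]

variable {E : Type*} [NormedAddCommGroup E] [NormedSpace ℝ E] {g : G → E}

theorem integrable_prod_density_smul (hX : Measurable X) (hV : Measurable V)
    (hXV : IndepFun X V P) (hρ : Measurable ρ) (hρ₀ : ∀ v, 0 ≤ ρ v)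
    (hV_law : P.map V = ν.withDensity fun v => ENNReal.ofReal (ρ v))
    (hg : Integrable g (P.map X)) :
    Integrable (fun p : G × G => ρ (p.2 - p.1) • g p.1) ((P.map X).prod ν) := by
  have hgJ := hg.comp_fst_map (f := fun ω => (X ω, X ω + V ω)) (by fun_prop)
  rw [map_prodMk_add_eq_withDensity hX hV hXV hρ hV_law,
    integrable_withDensity_iff_integrable_smul' (by fun_prop)
      (ae_of_all _ fun _ => ENNReal.ofReal_lt_top)] at hgJ
  simpa only [ENNReal.toReal_ofReal (hρ₀ _)] using hgJ

theorem setIntegral_preimage_add_eq (hX : Measurable X) (hV : Measurable V)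
    (hXV : IndepFun X V P) (hρ : Measurable ρ) (hρ₀ : ∀ v, 0 ≤ ρ v)
    (hV_law : P.map V = ν.withDensity fun v => ENNReal.ofReal (ρ v))
    (hg : Integrable g (P.map X)) {B : Set G} (hB : MeasurableSet B) :
    ∫ ω in (X + V) ⁻¹' B, g (X ω) ∂P = ∫ y in B, ∫ x, ρ (y - x) • g x ∂P.map X ∂ν := by
  have hs : MeasurableSet (Prod.snd ⁻¹' B : Set (G × G)) := measurable_snd hB
  have hint := (integrable_prod_density_smul hX hV hXV hρ hρ₀ hV_law hg).restrict
    (s := Set.univ ×ˢ B)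
  rw [← Measure.prod_restrict, Measure.restrict_univ] at hint
  calc ∫ ω in (X + V) ⁻¹' B, g (X ω) ∂P
      = ∫ p in Prod.snd ⁻¹' B, g p.1 ∂P.map fun ω => (X ω, X ω + V ω) := by
        exact (setIntegral_map hs (hg.comp_fst_map (f := fun ω => (X ω, X ω + V ω))
          (by fun_prop)).aestronglyMeasurable (by fun_prop)).symm
    _ = ∫ p in Set.univ ×ˢ B, ρ (p.2 - p.1) • g p.1 ∂(P.map X).prod ν := by
        rw [map_prodMk_add_eq_withDensity hX hV hXV hρ hV_law,
          setIntegral_withDensity_eq_setIntegral_toReal_smul (by fun_prop)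
            (ae_of_all _ fun _ => ENNReal.ofReal_lt_top) _ hs, Set.univ_prod]
        simp only [ENNReal.toReal_ofReal (hρ₀ _)]
    _ = ∫ y in B, ∫ x, ρ (y - x) • g x ∂P.map X ∂ν := by
        rw [← Measure.prod_restrict, Measure.restrict_univ, integral_prod_symm _ hint]

end AdditiveNoise

section Bayes

variable {Ω G : Type*} [MeasurableSpace Ω] [MeasurableSpace G] {P : Measure Ω} {ν : Measure G}
  {Y : Ω → G} {f : G → ℝ}

theorem ae_pos_comp_of_map_eq_withDensity (hY : Measurable Y) (hf : Measurable f)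
    (hY_law : P.map Y = ν.withDensity fun y => ENNReal.ofReal (f y)) :
    ∀ᵐ ω ∂P, 0 < f (Y ω) := by
  have hs : MeasurableSet {y | f y ≤ 0} := measurableSet_le hf measurable_const
  simp only [ae_iff, not_lt]
  change P (Y ⁻¹' {y | f y ≤ 0}) = 0
  rw [← Measure.map_apply hY hs, hY_law, withDensity_apply _ hs]
  exact setLIntegral_eq_zero hs fun y hy => ENNReal.ofReal_eq_zero.mpr hy

theorem condExp_comap_ae_eq_div [IsFiniteMeasure P] (hY : Measurable Y) (hf : Measurable f)
    (hf₀ : ∀ y, 0 ≤ f y) (hY_law : P.map Y = ν.withDensity fun y => ENNReal.ofReal (f y))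
    {N : G → ℝ} (hN : Measurable N) (hNi : Integrable N ν) (hN₀ : ∀ y, f y = 0 → N y = 0)
    {Z : Ω → ℝ} (hZ : Integrable Z P)
    (hZN : ∀ B, MeasurableSet B → ∫ ω in Y ⁻¹' B, Z ω ∂P = ∫ y in B, N y ∂ν) :
    P[Z | MeasurableSpace.comap Y ‹_›] =ᵐ[P] fun ω => N (Y ω) / f (Y ω) := by
  have hdiv : ∀ y, (ENNReal.ofReal (f y)).toReal • (N y / f y) = N y := by
    intro y
    rw [ENNReal.toReal_ofReal (hf₀ y), smul_eq_mul]
    rcases (hf₀ y).eq_or_lt with h | h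
    · simp [← h, hN₀ y h.symm]
    · field_simp
  have hNY : Integrable (fun y => N y / f y) (P.map Y) := by
    rw [hY_law, integrable_withDensity_iff_integrable_smul' (by fun_prop)
      (ae_of_all _ fun _ => ENNReal.ofReal_lt_top)]
    simpa only [hdiv] using hNi
  have : IsFiniteMeasure (P.trim hY.comap_le) := isFiniteMeasure_trim hY.comap_le
  refine (ae_eq_condExp_of_forall_setIntegral_eq hY.comap_le hZ (fun s _ _ => ?_) ?_ ?_).symm
  · exact ((integrable_map_measure hNY.aestronglyMeasurable hY.aemeasurable).mp hNY).integrableOn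
  · rintro _ ⟨B, hB, rfl⟩ _
    rw [hZN B hB, ← setIntegral_map hB hNY.aestronglyMeasurable hY.aemeasurable, hY_law,
      setIntegral_withDensity_eq_setIntegral_toReal_smul (by fun_prop)
        (ae_of_all _ fun _ => ENNReal.ofReal_lt_top) _ hB]
    simp only [hdiv]
  · exact ((hN.div hf).comp (comap_measurable Y)).aestronglyMeasurable

end Bayes

theorem integral_smul_eq_zero_of_integral_eq_zero {α E : Type*} [MeasurableSpace α]
    {μ : Measure α} [NormedAddCommGroup E] [NormedSpace ℝ E] {h : α → ℝ} (h₀ : 0 ≤ h)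
    (hi : Integrable h μ) (hz : ∫ x, h x ∂μ = 0) (w : α → E) : ∫ x, h x • w x ∂μ = 0 :=
  integral_eq_zero_of_ae <| by
    filter_upwards [(integral_eq_zero_iff_of_nonneg h₀ hi).mp hz] with x hx
    simp [hx]

theorem xiMem_integral_mul_comp_sub {d k : ℕ} {μ : Measure (Ed d)} {g fV : Ed d → ℝ}
    (hg : Integrable g μ) (hfV : ContDiff ℝ (k : ℕ∞) fV)
    (hdecay : ∀ n : ℕ, n ≤ k →
      Tendsto (fun x => ‖iteratedFDeriv ℝ n fV x‖) (cocompact (Ed d)) (𝓝 0))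
    (hint : Integrable fun z => ∫ x, g x * fV (z - x) ∂μ) :
    XiMem k fun z => ((∫ x, g x * fV (z - x) ∂μ : ℝ) : ℂ) := by
  have hdecay' (m : ℕ) (hm : (m : ℕ∞) ≤ k) :
      Tendsto (iteratedFDeriv ℝ m fV) (cocompact (Ed d)) (𝓝 0) :=
    tendsto_zero_iff_norm_tendsto_zero.mpr (hdecay m (by exact_mod_cast hm))
  have hbd (m : ℕ) (hm : (m : ℕ∞) ≤ k) : ∃ C, ∀ y, ‖iteratedFDeriv ℝ m fV y‖ ≤ C :=
    exists_norm_le_of_tendsto_cocompact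
      (hfV.continuous_iteratedFDeriv (by exact_mod_cast hm)) (hdecay' m hm)
  have hcd := contDiff_integral_smul_comp_sub hg hfV hbd
  refine ⟨Complex.ofRealCLM.contDiff.comp hcd, fun n hn => ?_, hint.ofReal⟩
  refine (tendsto_zero_iff_norm_tendsto_zero.mp <|
    tendsto_iteratedFDeriv_integral_smul_comp_sub_cocompact hg hfV hbd hdecay'
      (by exact_mod_cast hn)).congr fun x => ?_
  exact (Complex.ofRealLI.norm_iteratedFDeriv_comp_left hcd.contDiffAt (by exact_mod_cast hn)).symm

theorem tweedie_stmt14_general {d k : ℕ} {Ω : Type*} [MeasurableSpace Ω]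
    (P : Measure Ω) [IsProbabilityMeasure P]
    (Y X V : Ω → Ed d)
    (hX : Measurable X) (hV : Measurable V)
    (hadd : Y = X + V) (hindep : IndepFun X V P)
    (fV : Ed d → ℝ) (hfV : IsDensity fV)
    (hlaw : Measure.map V P = volume.withDensity fun v => ENNReal.ofReal (fV v))
    (hsm : ContDiff ℝ (k : ℕ∞) fV)
    (hdecay : ∀ n : ℕ, n ≤ k →
      Tendsto (fun x => ‖iteratedFDeriv ℝ n fV x‖) (cocompact (Ed d)) (𝓝 0))
    (g : Ed d → ℝ)
    (hgint : Integrable g (Measure.map X P))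
    (Ng fY : Ed d → ℝ)
    (hNg : Ng = fun z => ∫ x, g x * fV (z - x) ∂(Measure.map X P))
    (hfY : fY = fun z => ∫ x, fV (z - x) ∂(Measure.map X P)) :
    XiMem k (fun z => (Ng z : ℂ)) ∧
    (∀ᵐ ω ∂P, 0 < fY (Y ω)) ∧
    P[(fun ω => g (X ω))|MeasurableSpace.comap Y inferInstance]
      =ᵐ[P] fun ω => Ng (Y ω) / fY (Y ω) := by
  subst hadd
  obtain ⟨hfVm, hfV₀, -⟩ := hfV
  obtain ⟨C, hC⟩ := exists_norm_le_of_tendsto_cocompact hsm.continuous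
    (tendsto_zero_iff_norm_tendsto_zero.mpr (by simpa using hdecay 0 (Nat.zero_le k)))
  have hfV_int (y : Ed d) : Integrable (fun x => fV (y - x)) (P.map X) := by
    simpa using integrable_smul_comp_sub (integrable_const (1 : ℝ)) hsm.continuous hC y
  have hfY_cont : Continuous fY := by
    simpa [hfY] using continuous_integral_smul_comp_sub (μ := P.map X)
      (integrable_const (1 : ℝ)) hsm.continuous hC
  have hNg_cont : Continuous Ng := hNg ▸ continuous_integral_smul_comp_sub hgint hsm.continuous hC
  have hNg_eq (y : Ed d) : Ng y = ∫ x, fV (y - x) • g x ∂P.map X := by simp [hNg, mul_comm]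
  have hY_law : P.map (X + V) = volume.withDensity fun y => ENNReal.ofReal (fY y) := by
    rw [map_add_eq_withDensity hX hV hindep hfVm hlaw, hfY]
    simp_rw [ofReal_integral_eq_lintegral_ofReal (hfV_int _) (ae_of_all _ fun _ => hfV₀ _)]
  have hNg_int : Integrable Ng := by
    rw [funext hNg_eq]
    exact (integrable_prod_density_smul hX hV hindep hfVm hfV₀ hlaw hgint).integral_prod_right
  refine ⟨hNg ▸ xiMem_integral_mul_comp_sub hgint hsm hdecay (hNg ▸ hNg_int),
    ae_pos_comp_of_map_eq_withDensity (hX.add hV) hfY_cont.measurable hY_law,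
    condExp_comap_ae_eq_div (hX.add hV) hfY_cont.measurable
      (fun y => hfY ▸ integral_nonneg fun x => hfV₀ _) hY_law hNg_cont.measurable hNg_int
      (fun y hy => ?_) ((integrable_map_measure hgint.1 hX.aemeasurable).mp hgint)
      (fun B hB => ?_)⟩
  · rw [hNg_eq]
    exact integral_smul_eq_zero_of_integral_eq_zero (fun x => hfV₀ _) (hfV_int y)
      (by simpa [hfY] using hy) g
  · simpa only [hNg_eq] using setIntegral_preimage_add_eq hX hV hindep hfVm hfV₀ hlaw hgint hB

/-- **Statement 14.** In the additive-noise model `Y = X + V` with `X ⟂ V`,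
noise density `f_V ∈ C_0^k(ℝ^d;ℝ)` with a.e. nonvanishing characteristic
function, and `g` measurable with `g(X)` integrable, the numerator
`N_g(y) = ∫ g(x) f_V(y − x) dP_X(x)` belongs to `Ξ^k(ℝ^d;ℂ)`, `f_Y(Y) > 0`
almost surely, and `E[g(X) | Y] = N_g(Y)/f_Y(Y)` almost surely. -/
theorem tweedie_stmt14 {d k : ℕ} {Ω : Type*} [MeasurableSpace Ω]
    (P : Measure Ω) [IsProbabilityMeasure P]
    (Y X V : Ω → Ed d)
    (hY : Measurable Y) (hX : Measurable X) (hV : Measurable V)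
    (hadd : Y = X + V) (hindep : IndepFun X V P)
    (fV : Ed d → ℝ) (hfV : IsDensity fV)
    (hlaw : Measure.map V P = volume.withDensity fun v => ENNReal.ofReal (fV v))
    (hsm : ContDiff ℝ (k : ℕ∞) fV)
    (hdecay : ∀ n : ℕ, n ≤ k →
      Tendsto (fun x => ‖iteratedFDeriv ℝ n fV x‖) (cocompact (Ed d)) (𝓝 0))
    (hφ : ∀ᵐ ω : Ed d ∂volume, charFn fV ω ≠ 0)
    (g : Ed d → ℝ) (hg : Measurable g)
    (hgint : Integrable g (Measure.map X P))
    (Ng fY : Ed d → ℝ)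
    (hNg : Ng = fun z => ∫ x, g x * fV (z - x) ∂(Measure.map X P))
    (hfY : fY = fun z => ∫ x, fV (z - x) ∂(Measure.map X P)) :
    XiMem k (fun z => (Ng z : ℂ)) ∧
    (∀ᵐ ω ∂P, 0 < fY (Y ω)) ∧
    P[(fun ω => g (X ω))|MeasurableSpace.comap Y inferInstance]
      =ᵐ[P] fun ω => Ng (Y ω) / fY (Y ω) :=
  tweedie_stmt14_general P Y X V hX hV hadd hindep fV hfV hlaw hsm hdecay g hgint Ng fY hNg hfY
end
end
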